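/- Let q not be a root of unity, q ≠ 0, 1, and s ∈ ℤ, s ≠ 0. If a sequence (a'_n)_{n∈ℤ} satisfies ({m}-{n}) a'_{n+m} = ({m}-{n+s}) a'_n + ({m+s}-{n}) a'_m for all n, m ∈ ℤ, then a'_n = 0 for all n. -/
import Mathlib


/-- The `q`-number `{m} = (1-q^m)/(1-q)`. -/
noncomputable def qn (q : ℂ) (m : ℤ) : ℂ := (1 - q ^ m) / (1 - q)

/-- Degree `s ≠ 0` case: if `({m}-{n}) a'_{n+m} = ({m}-{n+s}) a'_n + ({m+s}-{n}) a'_m`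
for all `n, m`, then `a' ≡ 0`. -/
theorem stmt7 (q : ℂ) (hq0 : q ≠ 0) (hq1 : q ≠ 1)
    (hroot : ∀ k : ℤ, k ≠ 0 → q ^ k ≠ 1)
    (s : ℤ) (hs : s ≠ 0) (a' : ℤ → ℂ)
    (ha : ∀ n m : ℤ,
      (qn q m - qn q n) * a' (n + m)
        = (qn q m - qn q (n + s)) * a' n + (qn q (m + s) - qn q n) * a' m) :
    ∀ n : ℤ, a' n = 0 := by
  have hq1' : (1:ℂ) - q ≠ 0 := sub_ne_zero.mpr (Ne.symm hq1)
  have hu : (1:ℂ) - q ^ s ≠ 0 := sub_ne_zero.mpr (Ne.symm (hroot s hs))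
  have E : ∀ n m : ℤ, (q ^ n - q ^ m) * a' (n + m)
      = (q ^ (n + s) - q ^ m) * a' n + (q ^ n - q ^ (m + s)) * a' m := by
    intro n m
    have h := ha n m
    simp only [qn] at h
    field_simp at h
    linear_combination h
  have F : ∀ n : ℤ, q ^ n * (1 - q ^ s) * a' n = (q ^ n - q ^ s) * a' 0 := by
    intro n
    have h := E n 0
    rw [add_zero, zpow_add₀ hq0, zpow_zero, zero_add] at h
    linear_combination h
  -- q ≠ -1
  have hqm1 : q + 1 ≠ 0 := by
    intro h
    apply hroot 2 (by norm_num)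
    have : q = -1 := by linear_combination h
    rw [this]; norm_num
  have h0 : a' 0 = 0 := by
    have e1 := E 1 (-1)
    rw [show (1:ℤ) + -1 = 0 by ring, zpow_add₀ hq0, zpow_add₀ hq0, zpow_one,
      zpow_neg_one] at e1
    have f1 := F 1
    rw [zpow_one] at f1
    have f2 := F (-1)
    rw [zpow_neg_one] at f2
    have key : a' 0 * (q ^ s * (q - 1) ^ 3 * (q + 1)) = 0 := by
      have hq0' : q ≠ 0 := hq0
      field_simp at e1 f2
      linear_combination (q * (1 - q^s)) * e1 + (q^2 * q^s - 1) * f1 + q * (q^2 - q^s) * f2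
    rcases mul_eq_zero.mp key with h | h
    · exact h
    · exfalso
      have : q ^ s ≠ 0 := zpow_ne_zero s hq0
      have h3 : (q - 1) ^ 3 ≠ 0 := pow_ne_zero _ (sub_ne_zero.mpr hq1)
      simp [mul_eq_zero, this, h3, hqm1] at h
  intro n
  have h := F n
  rw [h0, mul_zero] at h
  have := mul_ne_zero (zpow_ne_zero n hq0) hu
  exact (mul_eq_zero.mp h).resolve_left this
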